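/- For all positive integers n, m, every even integer r ≥ 2, and every unit vector x ∈ ℝⁿ (‖x‖₂ = 1), the feature hashing matrix A satisfies ‖X(x)‖_r^r ≤ ‖x‖_∞^{2r} · ∑_{β=1}^{r/2} ∑_{α=2β}^{r} ( m^β / (‖x‖_∞² m)^α ) · ∑_{V ⊆ [n], |V| = α} |𝒮_{V,β}| · ∏_{q ∈ V} x_q². -/

import Mathlib

/-!
Since `r` is even, `|‖Ax‖₂² - 1| ^ r = (∑_{j ≠ l} σ_j σ_l x_j x_l [h j = h l]) ^ r`, which expands
into a sum over sequences `S` of `r` ordered pairs of distinct indices. Averaging over `σ` kills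
every `S` whose multigraph `G_S` has a vertex of odd degree. Averaging over `h` gives the probability
that `h` is constant on every connected component of `G_S`, which is at most `m ^ (β - α)` since
`G_S` has at most `n - α + β` components. For even degrees, every vertex of `V(S)` has degree at
least `2` and the degrees sum to `2r`, so `∏ x_q ^ d_q ≤ ‖x‖_∞ ^ (2r - 2α) ∏_{q ∈ V} x_q²`.
Grouping the sequences by `(β, α, V)` gives the bound.
-/

open scoped BigOperators Classical
noncomputable section

namespace FH

def hashSq (n m : ℕ) (h : Fin n → Fin m) (σ : Fin n → Bool) (x : Fin n → ℝ) : ℝ :=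
  ∑ i : Fin m, (∑ j : Fin n, (if h j = i then (if σ j then (1:ℝ) else -1) * x j else 0)) ^ 2

def hashE (n m : ℕ) (f : (Fin n → Fin m) → (Fin n → Bool) → ℝ) : ℝ :=
  (∑ p : (Fin n → Fin m) × (Fin n → Bool), f p.1 p.2) /
    (Fintype.card ((Fin n → Fin m) × (Fin n → Bool)) : ℝ)

def l2 (n : ℕ) (x : Fin n → ℝ) : ℝ := Real.sqrt (∑ j, x j ^ 2)

def linf (n : ℕ) (x : Fin n → ℝ) : ℝ := ⨆ j, |x j|

/-- `‖X(x)‖_r^r = E[ |‖Ax‖₂² − 1|^r ]`. -/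
def Xmom (n m r : ℕ) (x : Fin n → ℝ) : ℝ :=
  hashE n m (fun h σ => |hashSq n m h σ x - 1| ^ r)

/-- Degree of `q` in the multigraph `G_S` given by the sequence `S` of ordered pairs. -/
def dS (n r : ℕ) (S : Fin r → Fin n × Fin n) (q : Fin n) : ℕ :=
  (Finset.univ.filter (fun p : Fin r => q = (S p).1 ∨ q = (S p).2)).card

/-- `V(S)`: the set of vertices incident to some edge of `G_S` (equivalently, lying in a
connected component of `G_S` with at least two vertices, as all edges join distinct vertices). -/
def VS (n r : ℕ) (S : Fin r → Fin n × Fin n) : Finset (Fin n) :=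
  Finset.univ.filter (fun q : Fin n => ∃ p, q = (S p).1 ∨ q = (S p).2)

/-- The simple graph underlying the multigraph `G_S`. -/
def graphS (n r : ℕ) (S : Fin r → Fin n × Fin n) : SimpleGraph (Fin n) where
  Adj v w := v ≠ w ∧ ∃ p, S p = (v, w) ∨ S p = (w, v)
  symm := by
    constructor
    rintro v w ⟨hvw, p, hp⟩
    exact ⟨hvw.symm, p, hp.symm⟩
  loopless := by constructor; rintro v ⟨h, -⟩; exact h rfl

/-- `α(S) = |V(S)|`. -/
def alphaS (n r : ℕ) (S : Fin r → Fin n × Fin n) : ℕ := (VS n r S).card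

/-- `β(S)`: the number of connected components of `G_S` containing at least two vertices. -/
def betaS (n r : ℕ) (S : Fin r → Fin n × Fin n) : ℕ :=
  ((graphS n r S).connectedComponentMk '' (VS n r S : Set (Fin n))).ncard

/-- `𝒮_{V,β}`: sequences of `r` ordered pairs of distinct indices with all degrees even,
`V(S) = V` and `β(S) = β`. -/
def Sfam (n r : ℕ) (V : Finset (Fin n)) (β : ℕ) : Set (Fin r → Fin n × Fin n) :=
  {S | (∀ p, (S p).1 ≠ (S p).2) ∧ (∀ q, Even (dS n r S q)) ∧ VS n r S = V ∧ betaS n r S = β}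

open Finset

section Degrees

variable {n r : ℕ} {S : Fin r → Fin n × Fin n}

lemma mem_VS {q : Fin n} : q ∈ VS n r S ↔ ∃ p, q = (S p).1 ∨ q = (S p).2 := by
  simp [VS]

lemma dS_eq_zero_of_notMem {q : Fin n} (hq : q ∉ VS n r S) : dS n r S q = 0 := by
  simpa [dS, mem_VS] using hq

lemma dS_pos_of_mem {q : Fin n} (hq : q ∈ VS n r S) : 0 < dS n r S q := by
  obtain ⟨p, hp⟩ := mem_VS.mp hq
  exact card_pos.mpr ⟨p, mem_filter.mpr ⟨mem_univ _, hp⟩⟩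

lemma two_le_dS_of_mem {q : Fin n} (he : Even (dS n r S q)) (hq : q ∈ VS n r S) :
    2 ≤ dS n r S q := by
  obtain ⟨k, hk⟩ := he
  have := dS_pos_of_mem hq
  omega

lemma filter_endpoints (p : Fin r) :
    univ.filter (fun q => q = (S p).1 ∨ q = (S p).2) = {(S p).1, (S p).2} := by
  ext q; simp

lemma prod_pow_dS {M : Type*} [CommMonoid M] (hS : ∀ p, (S p).1 ≠ (S p).2) (f : Fin n → M) :
    ∏ q, f q ^ dS n r S q = ∏ p, f (S p).1 * f (S p).2 := by
  calc ∏ q, f q ^ dS n r S q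
      = ∏ q, ∏ p ∈ univ.filter (fun p => q = (S p).1 ∨ q = (S p).2), f q := by
        simp only [prod_const, dS]
    _ = ∏ p, ∏ q ∈ univ.filter (fun q => q = (S p).1 ∨ q = (S p).2), f q :=
        prod_comm' (by simp)
    _ = ∏ p, f (S p).1 * f (S p).2 := by
        simp only [filter_endpoints, prod_pair (hS _)]

lemma sum_dS (hS : ∀ p, (S p).1 ≠ (S p).2) : ∑ q ∈ VS n r S, dS n r S q = 2 * r := by
  rw [sum_subset (subset_univ _) fun q _ hq => dS_eq_zero_of_notMem hq]
  have hdouble := sum_card_bipartiteAbove_eq_sum_card_bipartiteBelow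
    (fun (q : Fin n) (p : Fin r) => q = (S p).1 ∨ q = (S p).2) (s := univ) (t := univ)
  simp only [bipartiteAbove, bipartiteBelow] at hdouble
  simp only [dS, hdouble, filter_endpoints, card_pair (hS _), sum_const, card_univ,
    Fintype.card_fin, smul_eq_mul, mul_comm]

end Degrees

section Components

variable {n r : ℕ} {S : Fin r → Fin n × Fin n}

lemma alphaS_le_r (hS : ∀ p, (S p).1 ≠ (S p).2) (he : ∀ q, Even (dS n r S q)) :
    alphaS n r S ≤ r := by
  have := card_nsmul_le_sum _ _ 2 fun q hq => two_le_dS_of_mem (he q) hq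
  rw [sum_dS hS, smul_eq_mul] at this
  rw [alphaS]
  omega

lemma alphaS_le_n : alphaS n r S ≤ n :=
  (card_le_univ _).trans_eq (Fintype.card_fin n)

lemma betaS_eq_card_image :
    betaS n r S = ((VS n r S).image (graphS n r S).connectedComponentMk).card := by
  rw [betaS, ← coe_image, Set.ncard_coe_finset]

lemma one_le_betaS (hr : 0 < r) : 1 ≤ betaS n r S := by
  rw [betaS_eq_card_image, Nat.one_le_iff_ne_zero, ← Nat.pos_iff_ne_zero, card_pos]
  exact ⟨_, mem_image_of_mem _ (mem_VS.mpr ⟨⟨0, hr⟩, Or.inl rfl⟩)⟩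

lemma two_mul_betaS_le_alphaS (hS : ∀ p, (S p).1 ≠ (S p).2) :
    2 * betaS n r S ≤ alphaS n r S := by
  rw [betaS_eq_card_image, alphaS]
  refine mul_card_image_le_card_of_maps_to (fun a ha => mem_image_of_mem _ ha) _ ?_
  rintro C hC
  obtain ⟨q, hq, rfl⟩ := mem_image.mp hC
  obtain ⟨p, hp⟩ := mem_VS.mp hq
  have hsame : (graphS n r S).connectedComponentMk (S p).1 =
      (graphS n r S).connectedComponentMk (S p).2 :=
    SimpleGraph.ConnectedComponent.eq.mpr (SimpleGraph.Adj.reachable ⟨hS p, p, Or.inl rfl⟩)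
  calc 2 = ({(S p).1, (S p).2} : Finset (Fin n)).card := (card_pair (hS p)).symm
    _ ≤ _ := by
      refine card_le_card fun a ha => ?_
      rw [mem_insert, mem_singleton] at ha
      refine mem_filter.mpr ⟨mem_VS.mpr ⟨p, ha⟩, ?_⟩
      rcases ha with rfl | rfl <;> rcases hp with rfl | rfl
      exacts [rfl, hsame, hsame.symm, rfl]

lemma card_connectedComponent_le :
    Fintype.card (graphS n r S).ConnectedComponent ≤ n - alphaS n r S + betaS n r S := by
  set cm := (graphS n r S).connectedComponentMk
  have hsurj : (univ : Finset (Fin n)).image cm = univ :=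
    eq_univ_of_forall fun C => C.ind fun v => mem_image_of_mem _ (mem_univ v)
  calc Fintype.card (graphS n r S).ConnectedComponent
      = ((VS n r S ∪ (VS n r S)ᶜ).image cm).card := by
        rw [union_compl, hsurj, card_univ]
    _ ≤ ((VS n r S)ᶜ.image cm).card + ((VS n r S).image cm).card := by
        rw [image_union, add_comm]; exact card_union_le _ _
    _ ≤ n - alphaS n r S + betaS n r S := by
        rw [betaS_eq_card_image]
        gcongr
        exact card_image_le.trans_eq (by rw [card_compl, Fintype.card_fin, alphaS])

end Components

section Hashes

variable {n r : ℕ}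

def collidingHashes (m : ℕ) (S : Fin r → Fin n × Fin n) : Finset (Fin n → Fin m) :=
  univ.filter fun h => ∀ p, h (S p).1 = h (S p).2

variable {m : ℕ} {S : Fin r → Fin n × Fin n}

lemma apply_eq_of_mem_collidingHashes {h : Fin n → Fin m} (hh : h ∈ collidingHashes m S)
    {a b : Fin n}
    (hab : (graphS n r S).connectedComponentMk a = (graphS n r S).connectedComponentMk b) :
    h a = h b := by
  obtain ⟨w⟩ := SimpleGraph.ConnectedComponent.eq.mp hab
  clear hab
  induction w with
  | nil => rfl
  | cons hadj _ ih =>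
    obtain ⟨-, p, hp | hp⟩ := hadj <;> have hcoll := (mem_filter.mp hh).2 p <;>
      rw [hp] at hcoll
    exacts [hcoll.trans ih, hcoll.symm.trans ih]

lemma card_collidingHashes_le (hm : 0 < m) :
    (collidingHashes m S).card ≤ m ^ (n - alphaS n r S + betaS n r S) := by
  calc (collidingHashes m S).card
      ≤ Fintype.card ((graphS n r S).ConnectedComponent → Fin m) := by
        refine card_le_card_of_injOn (fun h C => h C.out) (fun _ _ => mem_coe.mpr (mem_univ _)) ?_
        intro h₁ h₁m h₂ h₂m heq
        funext q
        have hq : (graphS n r S).connectedComponentMk q =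
            (graphS n r S).connectedComponentMk (Quot.out ((graphS n r S).connectedComponentMk q)) :=
          (Quot.out_eq _).symm
        rw [apply_eq_of_mem_collidingHashes h₁m hq, apply_eq_of_mem_collidingHashes h₂m hq]
        exact congrFun heq _
    _ = m ^ Fintype.card (graphS n r S).ConnectedComponent := by
        rw [Fintype.card_fun, Fintype.card_fin]
    _ ≤ m ^ (n - alphaS n r S + betaS n r S) := Nat.pow_le_pow_right hm card_connectedComponent_le

end Hashes

section Expansion

def boolSign (b : Bool) : ℝ := if b then 1 else -1

lemma boolSign_mul_self (b : Bool) : boolSign b * boolSign b = 1 := by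
  cases b <;> simp [boolSign]

lemma sum_prod_boolSign_pow {n : ℕ} (d : Fin n → ℕ) :
    ∑ σ : Fin n → Bool, ∏ q, boolSign (σ q) ^ d q =
      if ∀ q, Even (d q) then (2 : ℝ) ^ n else 0 := by
  have hq : ∀ q, ∑ b : Bool, boolSign b ^ d q = if Even (d q) then 2 else 0 := by
    intro q
    rcases Nat.even_or_odd (d q) with h | h
    · simp [boolSign, h.neg_one_pow, h]
    · simp [boolSign, h.neg_one_pow, Nat.not_even_iff_odd.mpr h]
  rw [← Fintype.piFinset_univ,
    ← prod_univ_sum (t := fun _ => univ) (f := fun q b => boolSign b ^ d q),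
    prod_congr rfl fun q _ => hq q, prod_ite_zero]
  simp

variable {n m : ℕ} (h : Fin n → Fin m) (σ : Fin n → Bool) (x : Fin n → ℝ)

lemma hashSq_eq_sum_collisions :
    hashSq n m h σ x = ∑ j, ∑ l,
      if h j = h l then boolSign (σ j) * x j * (boolSign (σ l) * x l) else 0 := by
  change ∑ i, (∑ j, if h j = i then boolSign (σ j) * x j else 0) ^ 2 = _
  simp only [sq, sum_mul_sum]
  rw [sum_comm]
  refine sum_congr rfl fun j _ => ?_
  rw [sum_comm]
  refine sum_congr rfl fun l _ => ?_
  simp only [ite_mul, mul_ite, mul_zero, zero_mul, sum_ite_eq, mem_univ, if_true]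

lemma hashSq_sub_one (hx : ∑ j, x j ^ 2 = 1) :
    hashSq n m h σ x - 1 = ∑ p ∈ (univ : Finset (Fin n)).offDiag,
      if h p.1 = h p.2 then boolSign (σ p.1) * x p.1 * (boolSign (σ p.2) * x p.2) else 0 := by
  rw [hashSq_eq_sum_collisions, ← sum_product' (f := fun j l =>
      if h j = h l then boolSign (σ j) * x j * (boolSign (σ l) * x l) else 0),
    ← diag_union_offDiag, sum_union (disjoint_diag_offDiag _), sum_diag, ← hx]
  simp only [if_true]
  have : ∀ j, boolSign (σ j) * x j * (boolSign (σ j) * x j) = x j ^ 2 := fun j => by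
    linear_combination x j ^ 2 * boolSign_mul_self (σ j)
  simp only [this, add_sub_cancel_left]

end Expansion

section Moment

variable {n m r : ℕ}

def pairSeqs (n r : ℕ) : Finset (Fin r → Fin n × Fin n) :=
  Fintype.piFinset fun _ => (univ : Finset (Fin n)).offDiag

lemma mem_pairSeqs {S : Fin r → Fin n × Fin n} :
    S ∈ pairSeqs n r ↔ ∀ p, (S p).1 ≠ (S p).2 := by
  simp [pairSeqs, mem_offDiag]

lemma sum_prod_collisions {S : Fin r → Fin n × Fin n} (hS : ∀ p, (S p).1 ≠ (S p).2)
    (x : Fin n → ℝ) :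
    ∑ hσ : (Fin n → Fin m) × (Fin n → Bool), ∏ p,
      (if hσ.1 (S p).1 = hσ.1 (S p).2 then
        boolSign (hσ.2 (S p).1) * x (S p).1 * (boolSign (hσ.2 (S p).2) * x (S p).2) else 0) =
      (collidingHashes m S).card * (∏ q, x q ^ dS n r S q) *
        if ∀ q, Even (dS n r S q) then (2 : ℝ) ^ n else 0 := by
  rw [Fintype.sum_prod_type, sum_comm]
  simp only [prod_ite_zero, mem_univ, true_implies, ← sum_filter, sum_const, nsmul_eq_mul]
  rw [mul_assoc, ← sum_prod_boolSign_pow, mul_sum, mul_sum, collidingHashes]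
  refine sum_congr rfl fun σ _ => ?_
  rw [← prod_pow_dS hS (fun q => boolSign (σ q) * x q)]
  simp only [mul_pow, prod_mul_distrib]
  ring

lemma Xmom_eq_sum_pairSeqs {x : Fin n → ℝ} (hr : Even r) (hx : ∑ j, x j ^ 2 = 1) :
    Xmom n m r x = ∑ S ∈ pairSeqs n r,
      if ∀ q, Even (dS n r S q) then
        (∏ q, x q ^ dS n r S q) * ((collidingHashes m S).card / (m : ℝ) ^ n) else 0 := by
  have hcard : (Fintype.card ((Fin n → Fin m) × (Fin n → Bool)) : ℝ) = (m : ℝ) ^ n * 2 ^ n := by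
    simp [Fintype.card_prod]
  rw [Xmom, hashE, hcard]
  simp only [hr.pow_abs, hashSq_sub_one _ _ _ hx, sum_pow']
  rw [sum_comm, sum_div]
  refine sum_congr rfl fun S hS => ?_
  rw [sum_prod_collisions (mem_pairSeqs.mp hS)]
  split_ifs
  · field_simp
  · simp

end Moment

section Bounds

lemma abs_le_linf {n : ℕ} (x : Fin n → ℝ) (j : Fin n) : |x j| ≤ linf n x :=
  le_ciSup (f := fun j => |x j|) (Set.finite_range _).bddAbove j

lemma linf_pos {n : ℕ} {x : Fin n → ℝ} (hx : ∑ j, x j ^ 2 = 1) : 0 < linf n x := by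
  obtain ⟨j, -, hj⟩ := exists_ne_zero_of_sum_ne_zero (hx.trans_ne one_ne_zero)
  exact (abs_pos.mpr (pow_ne_zero_iff two_ne_zero |>.mp hj)).trans_le (abs_le_linf x j)

lemma prod_pow_le_pow_mul_prod_sq {ι : Type*} (s : Finset ι) {x : ι → ℝ} {d : ι → ℕ} {L : ℝ}
    (hxL : ∀ i ∈ s, |x i| ≤ L) (hd : ∀ i ∈ s, Even (d i) ∧ 2 ≤ d i) :
    ∏ i ∈ s, x i ^ d i ≤ L ^ (∑ i ∈ s, (d i - 2)) * ∏ i ∈ s, x i ^ 2 := by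
  rw [← prod_pow_eq_pow_sum, ← prod_mul_distrib]
  refine prod_le_prod (fun i hi => (hd i hi).1.pow_nonneg _) fun i hi => ?_
  calc x i ^ d i = |x i| ^ (d i - 2) * x i ^ 2 := by
        rw [← (hd i hi).1.pow_abs, ← sq_abs, ← pow_add, Nat.sub_add_cancel (hd i hi).2]
    _ ≤ L ^ (d i - 2) * x i ^ 2 := by gcongr; exact hxL i hi

variable {n m r : ℕ} {S : Fin r → Fin n × Fin n}

lemma prod_pow_dS_le (hS : ∀ p, (S p).1 ≠ (S p).2) (he : ∀ q, Even (dS n r S q))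
    {x : Fin n → ℝ} {L : ℝ} (hxL : ∀ q, |x q| ≤ L) :
    ∏ q, x q ^ dS n r S q ≤ L ^ (2 * r - 2 * alphaS n r S) * ∏ q ∈ VS n r S, x q ^ 2 := by
  have h2 : ∀ q ∈ VS n r S, 2 ≤ dS n r S q := fun q hq => two_le_dS_of_mem (he q) hq
  have hexp : ∑ q ∈ VS n r S, (dS n r S q - 2) = 2 * r - 2 * alphaS n r S := by
    have hsum := sum_dS hS
    rw [← sum_congr rfl fun q hq => Nat.sub_add_cancel (h2 q hq), sum_add_distrib, sum_const,
      smul_eq_mul] at hsum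
    rw [alphaS]
    omega
  rw [← prod_subset (subset_univ _) fun q _ hq => by rw [dS_eq_zero_of_notMem hq, pow_zero],
    ← hexp]
  exact prod_pow_le_pow_mul_prod_sq _ (fun q _ => hxL q) fun q hq => ⟨he q, h2 q hq⟩

lemma card_collidingHashes_div_le (hm : 0 < m) :
    ((collidingHashes m S).card : ℝ) / (m : ℝ) ^ n ≤
      (m : ℝ) ^ betaS n r S / (m : ℝ) ^ alphaS n r S := by
  have hm' : (0 : ℝ) < m := Nat.cast_pos.mpr hm
  rw [div_le_div_iff₀ (by positivity) (by positivity)]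
  calc ((collidingHashes m S).card : ℝ) * (m : ℝ) ^ alphaS n r S
      ≤ (m : ℝ) ^ (n - alphaS n r S + betaS n r S) * (m : ℝ) ^ alphaS n r S := by
        gcongr; exact_mod_cast card_collidingHashes_le hm
    _ = (m : ℝ) ^ betaS n r S * (m : ℝ) ^ n := by
        rw [← pow_add, ← pow_add]
        congr 1
        have := alphaS_le_n (S := S)
        omega

lemma moment_term_le (hm : 0 < m) (hS : ∀ p, (S p).1 ≠ (S p).2) (he : ∀ q, Even (dS n r S q))
    {x : Fin n → ℝ} {L : ℝ} (hL : 0 < L) (hxL : ∀ q, |x q| ≤ L) :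
    (∏ q, x q ^ dS n r S q) * ((collidingHashes m S).card / (m : ℝ) ^ n) ≤
      L ^ (2 * r) * ((m : ℝ) ^ betaS n r S / (L ^ 2 * m) ^ alphaS n r S *
        ∏ q ∈ VS n r S, x q ^ 2) := by
  have hα := alphaS_le_r hS he
  calc (∏ q, x q ^ dS n r S q) * ((collidingHashes m S).card / (m : ℝ) ^ n)
      ≤ (L ^ (2 * r - 2 * alphaS n r S) * ∏ q ∈ VS n r S, x q ^ 2) *
          ((m : ℝ) ^ betaS n r S / (m : ℝ) ^ alphaS n r S) :=
        mul_le_mul (prod_pow_dS_le hS he hxL) (card_collidingHashes_div_le hm) (by positivity)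
          (mul_nonneg (by positivity) (prod_nonneg fun _ _ => sq_nonneg _))
    _ = _ := by
        have hsplit : L ^ (2 * r) = L ^ (2 * r - 2 * alphaS n r S) * L ^ (2 * alphaS n r S) := by
          rw [← pow_add]; congr 1; omega
        rw [hsplit, mul_pow, ← pow_mul]
        field_simp

end Bounds

section Regrouping

variable {n r : ℕ}

def evenSeqs (n r : ℕ) : Finset (Fin r → Fin n × Fin n) :=
  (pairSeqs n r).filter fun S => ∀ q, Even (dS n r S q)

lemma mem_evenSeqs {S : Fin r → Fin n × Fin n} :
    S ∈ evenSeqs n r ↔ (∀ p, (S p).1 ≠ (S p).2) ∧ ∀ q, Even (dS n r S q) := by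
  rw [evenSeqs, mem_filter, mem_pairSeqs]

lemma ncard_Sfam_eq_card_filter {V : Finset (Fin n)} {α β : ℕ} (hV : V.card = α) :
    (Sfam n r V β).ncard =
      ((evenSeqs n r).filter fun S =>
        betaS n r S = β ∧ alphaS n r S = α ∧ VS n r S = V).card := by
  rw [← Set.ncard_coe_finset]
  congr 1
  ext S
  rw [mem_coe, mem_filter, mem_evenSeqs, alphaS]
  change (_ ∧ _ ∧ _ ∧ _) ↔ _
  constructor
  · rintro ⟨hS, he, rfl, rfl⟩
    exact ⟨⟨hS, he⟩, rfl, hV, rfl⟩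
  · rintro ⟨⟨hS, he⟩, rfl, -, rfl⟩
    exact ⟨hS, he, rfl, rfl⟩

lemma sum_evenSeqs_eq_sum_Sfam (hr : 0 < r) {M : Type*} [AddCommMonoid M]
    (F : ℕ → ℕ → Finset (Fin n) → M) :
    ∑ S ∈ evenSeqs n r, F (betaS n r S) (alphaS n r S) (VS n r S) =
      ∑ β ∈ Icc 1 (r / 2), ∑ α ∈ Icc (2 * β) r,
        ∑ V ∈ powersetCard α (univ : Finset (Fin n)), (Sfam n r V β).ncard • F β α V := by
  rw [← sum_fiberwise_of_maps_to (g := betaS n r) (t := Icc 1 (r / 2))]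
  · refine sum_congr rfl fun β _ => ?_
    rw [← sum_fiberwise_of_maps_to (g := alphaS n r) (t := Icc (2 * β) r)]
    · refine sum_congr rfl fun α _ => ?_
      rw [← sum_fiberwise_of_maps_to (g := VS n r) (t := powersetCard α univ)]
      · refine sum_congr rfl fun V hV => ?_
        rw [ncard_Sfam_eq_card_filter (mem_powersetCard.mp hV).2, ← sum_const]
        simp only [filter_filter, and_assoc]
        exact sum_congr rfl fun S hS => by obtain ⟨-, rfl, rfl, rfl⟩ := mem_filter.mp hS; rfl
      · intro S hS
        exact mem_powersetCard.mpr ⟨subset_univ _, (mem_filter.mp hS).2⟩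
    · intro S hS
      obtain ⟨hSe, rfl⟩ := mem_filter.mp hS
      obtain ⟨hS, he⟩ := mem_evenSeqs.mp hSe
      exact mem_Icc.mpr ⟨two_mul_betaS_le_alphaS hS, alphaS_le_r hS he⟩
  · intro S hS
    obtain ⟨hS, he⟩ := mem_evenSeqs.mp hS
    have := two_mul_betaS_le_alphaS hS
    have := alphaS_le_r hS he
    exact mem_Icc.mpr ⟨one_le_betaS hr, by omega⟩

end Regrouping

theorem moment_sum_upper :
    ∀ n m r : ℕ, 0 < n → 0 < m → Even r → 2 ≤ r →
      ∀ x : Fin n → ℝ, l2 n x = 1 →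
        Xmom n m r x ≤ linf n x ^ (2*r) *
          ∑ β ∈ Finset.Icc 1 (r/2), ∑ α ∈ Finset.Icc (2*β) r,
            (m:ℝ)^β / (linf n x ^ 2 * m)^α *
              ∑ V ∈ Finset.powersetCard α (Finset.univ : Finset (Fin n)),
                ((Sfam n r V β).ncard : ℝ) * ∏ q ∈ V, x q ^ 2 := by
  intro n m r _ hm hr hr2 x hx
  have hx2 : ∑ j, x j ^ 2 = 1 := Real.sqrt_eq_one.mp hx
  set L := linf n x
  have hL : 0 < L := linf_pos hx2
  calc Xmom n m r x
      = ∑ S ∈ evenSeqs n r,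
          (∏ q, x q ^ dS n r S q) * ((collidingHashes m S).card / (m : ℝ) ^ n) := by
        rw [Xmom_eq_sum_pairSeqs hr hx2, evenSeqs, sum_filter]
    _ ≤ ∑ S ∈ evenSeqs n r, L ^ (2 * r) * ((m : ℝ) ^ betaS n r S / (L ^ 2 * m) ^ alphaS n r S *
          ∏ q ∈ VS n r S, x q ^ 2) := by
        refine sum_le_sum fun S hS => ?_
        obtain ⟨hS, he⟩ := mem_evenSeqs.mp hS
        exact moment_term_le hm hS he hL (abs_le_linf x)
    _ = _ := by
        rw [← mul_sum, sum_evenSeqs_eq_sum_Sfam (by omega) fun β α V =>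
          (m : ℝ) ^ β / (L ^ 2 * m) ^ α * ∏ q ∈ V, x q ^ 2]
        simp only [nsmul_eq_mul, mul_sum]
        exact sum_congr rfl fun β _ => sum_congr rfl fun α _ => sum_congr rfl fun V _ => by ring

end FH
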